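/- arXiv:2106.00542 — 2 statements merged into one kernel-verified Lean document; each statement's English description precedes it below -/
import Mathlib

section
/- If limsup_{t→0} (η(t) − η(0))/φ(t) = 1 almost surely, then lim_{t→0} (E(η(t) − η(0))²)^{1/2} / φ(t) = 0; equivalently, φ(t) = (E(η(t) − η(0))²)^{1/2} h(t) for a function h with lim_{t↓0} h(t) = ∞. -/
open MeasureTheory ProbabilityTheory Filter Set
open scoped NNReal ENNReal Topology

/-!
If the conclusion failed, then for some `ε > 0` there would be arbitrarily small `t` with
`σ(t) ≥ ε φ(t)`, where `σ(t)²` is the variance of the centred Gaussian increment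
`η(t) − η(0)`. Scaling a standard Gaussian then gives
`P(η(t) − η(0) ≥ 2 φ(t)) ≥ P(N(0,1) ≥ 2/ε) > 0` for all such `t`. But the limsup hypothesis
says that almost surely `η(t) − η(0) < 2 φ(t)` for all small `t`, so by dominated convergence
these probabilities tend to `0`.
-/

-- An unbounded real function has the junk limsup `sInf ∅ = 0`.
lemma Real.isBoundedUnder_le_of_limsup_ne_zero {α : Type*} {f : Filter α} {u : α → ℝ}
    (h : limsup u f ≠ 0) : IsBoundedUnder (· ≤ ·) f u := by
  contrapose! h
  have hempty : {a : ℝ | ∀ᶠ x in f, u x ≤ a} = ∅ :=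
    eq_empty_of_forall_notMem fun a ha => h ⟨a, ha⟩
  rw [limsup_eq, hempty, Real.sInf_empty]

namespace ProbabilityTheory

variable {v : ℝ≥0}

lemma integral_sq_gaussianReal_zero : ∫ x, x ^ 2 ∂gaussianReal 0 v = v := by
  simpa [variance_eq_integral measurable_id'.aemeasurable] using
    variance_fun_id_gaussianReal (μ := 0) (v := v)

lemma gaussianReal_Ici_pos (μ a : ℝ) (hv : v ≠ 0) : 0 < gaussianReal μ v (Ici a) := by
  refine pos_iff_ne_zero.2 fun h => ?_
  have := gaussianReal_absolutelyContinuous' μ hv h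
  simp [Real.volume_Ici] at this

lemma gaussianReal_zero_one_Ici_le {a c : ℝ} (hc : c ≤ √v * a) :
    gaussianReal 0 1 (Ici a) ≤ gaussianReal 0 v (Ici c) := by
  have hscale : (gaussianReal 0 1).map (√v * ·) = gaussianReal 0 v := by
    rw [gaussianReal_map_const_mul, mul_zero, mul_one]
    congr 1
    exact NNReal.eq (by simp)
  rw [← hscale, Measure.map_apply (measurable_const_mul _) measurableSet_Ici]
  exact measure_mono fun x (hx : a ≤ x) =>
    hc.trans (mul_le_mul_of_nonneg_left hx (Real.sqrt_nonneg _))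

variable {Ω : Type*} [MeasurableSpace Ω] {P : Measure Ω} {X : Ω → ℝ}

lemma HasLaw.integral_sq_eq (hX : HasLaw X (gaussianReal 0 v) P) : ∫ ω, X ω ^ 2 ∂P = v := by
  rw [← integral_sq_gaussianReal_zero]
  exact hX.integral_comp (f := fun x => x ^ 2) (by fun_prop)

lemma HasLaw.gaussianReal_Ici_le_measure (hX : HasLaw X (gaussianReal 0 v) P)
    (hXm : Measurable X) {a c : ℝ} (hc : c ≤ √(∫ ω, X ω ^ 2 ∂P) * a) :
    gaussianReal 0 1 (Ici a) ≤ P {ω | c ≤ X ω} := by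
  rw [hX.integral_sq_eq] at hc
  calc gaussianReal 0 1 (Ici a) ≤ gaussianReal 0 v (Ici c) := gaussianReal_zero_one_Ici_le hc
    _ = P {ω | c ≤ X ω} := by
      rw [← hX.map_eq, Measure.map_apply hXm measurableSet_Ici]; rfl

end ProbabilityTheory

lemma MeasureTheory.tendsto_measure_zero_of_ae_eventually_notMem {α ι : Type*}
    [MeasurableSpace α] {μ : Measure α} [IsFiniteMeasure μ] {L : Filter ι}
    [L.IsCountablyGenerated] {A : ι → Set α} (hA : ∀ i, MeasurableSet (A i))
    (h : ∀ᵐ x ∂μ, ∀ᶠ i in L, x ∉ A i) : Tendsto (fun i => μ (A i)) L (𝓝 0) := by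
  simpa using tendsto_measure_of_ae_tendsto_indicator_of_isFiniteMeasure L
    MeasurableSet.empty hA (by simpa using h)

lemma exists_hasLaw_gaussianReal_sub {Ω : Type*} [MeasurableSpace Ω] {P : Measure Ω}
    {η : ℝ → Ω → ℝ} {S : Set ℝ} (hmeas : ∀ t, Measurable (η t))
    (hGauss : ∀ (n : ℕ) (t : Fin n → ℝ) (a : Fin n → ℝ), (∀ j, t j ∈ S) →
      ∃ v : ℝ≥0, Measure.map (fun ω => ∑ j, a j * η (t j) ω) P = gaussianReal 0 v)
    {s t : ℝ} (hs : s ∈ S) (ht : t ∈ S) :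
    ∃ v : ℝ≥0, HasLaw (fun ω => η t ω - η s ω) (gaussianReal 0 v) P := by
  obtain ⟨v, hv⟩ := hGauss 2 ![t, s] ![1, -1] (by simp [Fin.forall_fin_two, hs, ht])
  refine ⟨v, ⟨((hmeas t).sub (hmeas s)).aemeasurable, ?_⟩⟩
  simpa [Fin.sum_univ_two, ← sub_eq_add_neg] using hv

theorem phi_dominates_sigma_general
    {Ω : Type*} [MeasurableSpace Ω] (P : Measure Ω) [IsProbabilityMeasure P]
    (η : ℝ → Ω → ℝ)
    (hmeas : ∀ t, Measurable (η t))
    (hGauss : ∀ (n : ℕ) (t : Fin n → ℝ) (a : Fin n → ℝ), (∀ j, t j ∈ Icc (0:ℝ) 1) →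
      ∃ v : ℝ≥0, Measure.map (fun ω => ∑ j, a j * η (t j) ω) P = gaussianReal 0 v)
    (δ : ℝ) (hδ : 0 < δ) (φ : ℝ → ℝ) (hφ : ∀ t ∈ Icc (0:ℝ) δ, 0 < φ t)
    (hlimsup : ∀ᵐ ω ∂P,
      Filter.limsup (fun t => (η t ω - η 0 ω) / φ t) (𝓝[>] (0:ℝ)) = 1) :
    Tendsto (fun t => Real.sqrt (∫ ω, (η t ω - η 0 ω) ^ 2 ∂P) / φ t)
      (𝓝[>] (0:ℝ)) (𝓝 0) := by
  have hnear : ∀ᶠ t in 𝓝[>] (0:ℝ), t ∈ Icc 0 1 ∧ 0 < φ t := by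
    filter_upwards [Ioo_mem_nhdsGT (lt_min hδ one_pos)] with t ht
    exact ⟨⟨ht.1.le, ht.2.le.trans (min_le_right _ _)⟩,
      hφ t ⟨ht.1.le, ht.2.le.trans (min_le_left _ _)⟩⟩
  have hrare : Tendsto (fun t => P {ω | 2 * φ t ≤ η t ω - η 0 ω}) (𝓝[>] 0) (𝓝 0) := by
    refine tendsto_measure_zero_of_ae_eventually_notMem
      (fun t => measurableSet_le measurable_const ((hmeas t).sub (hmeas 0))) ?_
    filter_upwards [hlimsup] with ω hω
    have hbdd := Real.isBoundedUnder_le_of_limsup_ne_zero (hω.trans_ne one_ne_zero)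
    filter_upwards [hnear, eventually_lt_of_limsup_lt (hω.trans_lt one_lt_two) hbdd]
      with t ⟨_, hφt⟩ hlt
    simpa [div_lt_iff₀ hφt] using hlt
  rw [Metric.tendsto_nhds]
  intro ε hε
  have htail := gaussianReal_Ici_pos 0 (2 / ε) one_ne_zero
  filter_upwards [hnear, hrare.eventually (gt_mem_nhds htail)] with t ⟨ht, hφt⟩ hPt
  obtain ⟨v, hv⟩ := exists_hasLaw_gaussianReal_sub hmeas hGauss ⟨le_rfl, zero_le_one⟩ ht
  rw [Real.dist_eq, sub_zero, abs_of_nonneg (by positivity), div_lt_iff₀ hφt]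
  by_contra! hle
  refine hPt.not_ge (hv.gaussianReal_Ici_le_measure ((hmeas t).sub (hmeas 0)) ?_)
  calc 2 * φ t = ε * φ t * (2 / ε) := by field_simp
    _ ≤ _ := by gcongr

/-- If `limsup_{t→0} (η(t) − η(0))/φ(t) = 1` a.s., then
`lim_{t→0} (E(η(t) − η(0))²)^{1/2}/φ(t) = 0`; equivalently
`φ(t) = (E(η(t) − η(0))²)^{1/2} h(t)` for a function `h` with `lim_{t↓0} h(t) = ∞`. -/
theorem phi_dominates_sigma
    {Ω : Type*} [MeasurableSpace Ω] (P : Measure Ω) [IsProbabilityMeasure P]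
    (η : ℝ → Ω → ℝ)
    (hmeas : ∀ t, Measurable (η t))
    (hGauss : ∀ (n : ℕ) (t : Fin n → ℝ) (a : Fin n → ℝ), (∀ j, t j ∈ Icc (0:ℝ) 1) →
      ∃ v : ℝ≥0, Measure.map (fun ω => ∑ j, a j * η (t j) ω) P = gaussianReal 0 v)
    (hcont : ∀ ω, ContinuousOn (fun t => η t ω) (Icc (0:ℝ) 1))
    (U : ℝ → ℝ → ℝ) (hU : ∀ s t, U s t = ∫ ω, η s ω * η t ω ∂P)
    (hU0 : 0 < U 0 0)
    (δ : ℝ) (hδ : 0 < δ) (φ : ℝ → ℝ) (hφ : ∀ t ∈ Icc (0:ℝ) δ, 0 < φ t)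
    (hlimsup : ∀ᵐ ω ∂P,
      Filter.limsup (fun t => (η t ω - η 0 ω) / φ t) (𝓝[>] (0:ℝ)) = 1) :
    Tendsto (fun t => Real.sqrt (∫ ω, (η t ω - η 0 ω) ^ 2 ∂P) / φ t)
      (𝓝[>] (0:ℝ)) (𝓝 0) :=
  phi_dominates_sigma_general P η hmeas hGauss δ hδ φ hφ hlimsup
end

section
/- If limsup_{t→0} (η(t) − η(0))/φ(t) = 1 almost surely, then limsup_{t→0} |U(0,0) − U(0,t)| / (U(0,0) φ(t)) = 0. -/
/-!
Write `X t = η t - η 0` and `σ(t)² = E[X t ²]`. By Cauchy–Schwarz,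
`|U(0,0) - U(0,t)| = |E[η 0 · X t]| ≤ √U(0,0) · σ(t)`, so it suffices that `σ(t) = o(φ t)`.
As `X t` is centred Gaussian, `P(X t ≥ 2 φ t) = P(N(0,1) ≥ 2 φ t / σ(t))`. Almost surely
`X t < 2 φ t` for all small `t` (the limsup is `1 < 2`), so by dominated convergence these
probabilities tend to `0`, which forces `φ t / σ(t) → ∞`.
-/

open MeasureTheory ProbabilityTheory Filter Set
open scoped NNReal ENNReal Topology

/-- A real function that is not bounded above has `limsup = sInf ∅ = 0`. -/
lemma Real.eventually_lt_of_limsup_lt_of_ne_zero {α : Type*} {f : Filter α} {u : α → ℝ} {b : ℝ}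
    (h : limsup u f < b) (h0 : limsup u f ≠ 0) : ∀ᶠ x in f, u x < b := by
  refine eventually_lt_of_limsup_lt h ?_
  by_contra hb
  refine h0 ?_
  have hempty : {a | ∀ᶠ x in f, u x ≤ a} = ∅ :=
    Set.eq_empty_of_forall_notMem fun a ha => hb ⟨a, ha⟩
  rw [limsup_eq, hempty, Real.sInf_empty]

lemma abs_integral_mul_le_sqrt_mul_sqrt {α : Type*} [MeasurableSpace α] {μ : Measure α}
    {f g : α → ℝ} (hf : MemLp f 2 μ) (hg : MemLp g 2 μ) :
    |∫ a, f a * g a ∂μ| ≤ √(∫ a, f a ^ 2 ∂μ) * √(∫ a, g a ^ 2 ∂μ) := by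
  calc |∫ a, f a * g a ∂μ| ≤ ∫ a, ‖f a‖ * ‖g a‖ ∂μ := by
        simpa [norm_mul] using norm_integral_le_integral_norm (fun a => f a * g a)
    _ ≤ _ := integral_mul_norm_le_Lp_mul_Lq Real.HolderConjugate.two_two
        (by simpa using hf) (by simpa using hg)
    _ = √(∫ a, f a ^ 2 ∂μ) * √(∫ a, g a ^ 2 ∂μ) := by
        simp [Real.sqrt_eq_rpow, Real.norm_eq_abs]

lemma abs_integral_mul_self_sub_integral_mul_le {α : Type*} [MeasurableSpace α] {μ : Measure α}
    {f g : α → ℝ} (hf : MemLp f 2 μ) (hg : MemLp g 2 μ) :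
    |∫ a, f a * f a ∂μ - ∫ a, f a * g a ∂μ| ≤
      √(∫ a, f a * f a ∂μ) * √(∫ a, (g a - f a) ^ 2 ∂μ) := by
  have hff : Integrable (fun a => f a * f a) μ := hf.integrable_mul hf
  have hfg : Integrable (fun a => f a * g a) μ := hf.integrable_mul hg
  rw [← integral_sub hff hfg, ← abs_neg, ← integral_neg]
  simpa [← sq, mul_sub] using abs_integral_mul_le_sqrt_mul_sqrt hf (hg.sub hf)

lemma div_mul_le_inv_sqrt_mul_div {a b u φ : ℝ} (hab : a ≤ √u * b) (hu : 0 ≤ u) (hφ : 0 < φ) :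
    a / (u * φ) ≤ (√u)⁻¹ * (b / φ) := by
  rcases hu.eq_or_lt with rfl | hu
  · simp
  calc a / (u * φ) ≤ √u * b / (u * φ) := by gcongr
    _ = (√u)⁻¹ * (b / φ) := by
      field_simp
      rw [Real.sq_sqrt hu.le, mul_comm]

lemma gaussianReal_Ici_eq_standard {v : ℝ≥0} (hv : v ≠ 0) (a : ℝ) :
    gaussianReal 0 v (Ici a) = gaussianReal 0 1 (Ici (a / √v)) := by
  have hs : 0 < √(v : ℝ) := Real.sqrt_pos.2 (by positivity)
  have hmap : (gaussianReal 0 1).map (√(v : ℝ) * ·) = gaussianReal 0 v := by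
    rw [gaussianReal_map_const_mul]
    congr 1
    · simp
    · ext; simp
  rw [← hmap, Measure.map_apply (by fun_prop) measurableSet_Ici]
  congr 1
  ext x
  simp [div_le_iff₀ hs, mul_comm]

lemma gaussianReal_Ici_pos (μ : ℝ) {v : ℝ≥0} (hv : v ≠ 0) (a : ℝ) :
    0 < gaussianReal μ v (Ici a) :=
  pos_iff_ne_zero.2 fun h => by
    simpa using gaussianReal_absolutelyContinuous' μ hv h

section GaussianLaw

variable {Ω : Type*} [MeasurableSpace Ω] {P : Measure Ω} {X : Ω → ℝ} {v : ℝ≥0}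

lemma memLp_two_of_map_eq_gaussianReal (hX : Measurable X) (hlaw : P.map X = gaussianReal 0 v) :
    MemLp X 2 P := by
  have h := memLp_id_gaussianReal (μ := 0) (v := v) 2
  rw [← hlaw] at h
  exact (memLp_map_measure_iff aestronglyMeasurable_id hX.aemeasurable).1 h

lemma integral_sq_of_map_eq_gaussianReal (hX : Measurable X)
    (hlaw : P.map X = gaussianReal 0 v) : ∫ ω, X ω ^ 2 ∂P = v := by
  rw [← integral_map (f := fun x => x ^ 2) hX.aemeasurable (by fun_prop), hlaw,
    ← variance_id_gaussianReal (μ := 0),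
    variance_of_integral_eq_zero aemeasurable_id integral_id_gaussianReal]
  rfl

end GaussianLaw

section GaussianTail

variable {Ω ι : Type*} [MeasurableSpace Ω] {P : Measure Ω} [IsProbabilityMeasure P]
  {l : Filter ι} [l.IsCountablyGenerated]

theorem tendsto_sqrt_div_of_ae_eventually_lt {X : ι → Ω → ℝ} (hX : ∀ t, Measurable (X t))
    {v : ι → ℝ≥0} (hlaw : ∀ᶠ t in l, P.map (X t) = gaussianReal 0 (v t))
    {ψ : ι → ℝ} (hψ : ∀ᶠ t in l, 0 < ψ t) {c : ℝ} (hc : 0 ≤ c)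
    (hbound : ∀ᵐ ω ∂P, ∀ᶠ t in l, X t ω < c * ψ t) :
    Tendsto (fun t => √(v t) / ψ t) l (𝓝 0) := by
  have hsmall : Tendsto (fun t => P {ω | c * ψ t ≤ X t ω}) l (𝓝 0) := by
    simpa using tendsto_measure_of_ae_tendsto_indicator_of_isFiniteMeasure l
      MeasurableSet.empty (fun t => measurableSet_le measurable_const (hX t))
      (hbound.mono fun ω hω => hω.mono fun t ht => iff_of_false (not_le.2 ht) id)
  rw [Metric.tendsto_nhds]
  intro ε hε
  by_contra hfar
  have hlarge : ∃ᶠ t in l, gaussianReal 0 1 (Ici (c / ε)) ≤ P {ω | c * ψ t ≤ X t ω} := by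
    refine ((not_eventually.1 hfar).and_eventually (hlaw.and hψ)).mono ?_
    rintro t ⟨hdist, hlaw_t, hψ_t⟩
    have hsd : ε * ψ t ≤ √(v t) := by
      rw [Real.dist_eq, sub_zero, not_lt, abs_of_nonneg (by positivity), le_div_iff₀ hψ_t] at hdist
      exact hdist
    have hsd_pos : 0 < √(v t : ℝ) := (mul_pos hε hψ_t).trans_le hsd
    have hv : v t ≠ 0 := by
      intro h
      simp [h] at hsd_pos
    rw [show {ω | c * ψ t ≤ X t ω} = X t ⁻¹' Ici (c * ψ t) from rfl,
      ← Measure.map_apply (hX t) measurableSet_Ici, hlaw_t, gaussianReal_Ici_eq_standard hv]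
    refine measure_mono (Ici_subset_Ici.2 ?_)
    rw [div_le_div_iff₀ hsd_pos hε]
    nlinarith
  exact hlarge <| (hsmall.eventually (gt_mem_nhds (gaussianReal_Ici_pos 0 one_ne_zero _))).mono
    fun t ht => not_le.2 ht

end GaussianTail

theorem covariance_increment_negligible_general
    {Ω : Type*} [MeasurableSpace Ω] (P : Measure Ω) [IsProbabilityMeasure P]
    (η : ℝ → Ω → ℝ)
    (hmeas : ∀ t, Measurable (η t))
    (hGauss : ∀ (n : ℕ) (t : Fin n → ℝ) (a : Fin n → ℝ), (∀ j, t j ∈ Icc (0:ℝ) 1) →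
      ∃ v : ℝ≥0, Measure.map (fun ω => ∑ j, a j * η (t j) ω) P = gaussianReal 0 v)
    (U : ℝ → ℝ → ℝ) (hU : ∀ s t, U s t = ∫ ω, η s ω * η t ω ∂P)
    (δ : ℝ) (hδ : 0 < δ) (φ : ℝ → ℝ) (hφ : ∀ t ∈ Icc (0:ℝ) δ, 0 < φ t)
    (hlimsup : ∀ᵐ ω ∂P,
      Filter.limsup (fun t => (η t ω - η 0 ω) / φ t) (𝓝[>] (0:ℝ)) = 1) :
    Filter.limsup (fun t => |U 0 0 - U 0 t| / (U 0 0 * φ t)) (𝓝[>] (0:ℝ)) = 0 := by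
  have hL2 : ∀ t ∈ Icc (0:ℝ) 1, MemLp (η t) 2 P := fun t ht => by
    obtain ⟨v, hv⟩ := hGauss 1 ![t] ![1] (by simpa using ht)
    exact memLp_two_of_map_eq_gaussianReal (hmeas t) (by simpa using hv)
  have hincr : ∀ t ∈ Icc (0:ℝ) 1, ∃ v : ℝ≥0,
      P.map (fun ω => η t ω - η 0 ω) = gaussianReal 0 v := fun t ht => by
    simpa [Fin.sum_univ_two, ← sub_eq_add_neg] using
      hGauss 2 ![t, 0] ![1, -1] (by simpa [Fin.forall_fin_two] using ht)
  choose! v hv using hincr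
  have hφ_pos : ∀ᶠ t in 𝓝[>] (0:ℝ), 0 < φ t := by
    filter_upwards [Ioo_mem_nhdsGT hδ] with t ht using hφ t (Ioo_subset_Icc_self ht)
  have hunit : ∀ᶠ t in 𝓝[>] (0:ℝ), t ∈ Icc (0:ℝ) 1 :=
    mem_of_superset (Ioo_mem_nhdsGT one_pos) Ioo_subset_Icc_self
  have hsd : Tendsto (fun t => √(v t) / φ t) (𝓝[>] 0) (𝓝 0) := by
    refine tendsto_sqrt_div_of_ae_eventually_lt (X := fun t ω => η t ω - η 0 ω)
      (fun t => (hmeas t).sub (hmeas 0)) (hunit.mono hv) hφ_pos zero_le_two ?_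
    filter_upwards [hlimsup] with ω hω
    filter_upwards [Real.eventually_lt_of_limsup_lt_of_ne_zero (hω ▸ one_lt_two) (by simp [hω]),
      hφ_pos] with t ht hφt
    linarith [(div_lt_iff₀ hφt).1 ht]
  have hU00 : 0 ≤ U 0 0 := (hU 0 0).symm ▸ integral_nonneg fun ω => mul_self_nonneg _
  refine (squeeze_zero' ?_ ?_ (by simpa using hsd.const_mul (√(U 0 0))⁻¹)).limsup_eq
  · filter_upwards [hφ_pos] with t hφt
    positivity
  · filter_upwards [hφ_pos, hunit] with t hφt ht
    refine div_mul_le_inv_sqrt_mul_div ?_ hU00 hφt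
    simp only [hU]
    rw [← integral_sq_of_map_eq_gaussianReal (hmeas t |>.sub (hmeas 0)) (hv t ht)]
    exact abs_integral_mul_self_sub_integral_mul_le (hL2 0 (by simp)) (hL2 t ht)

/-- If `limsup_{t→0} (η(t) − η(0))/φ(t) = 1` a.s., then
`limsup_{t→0} |U(0,0) − U(0,t)|/(U(0,0) φ(t)) = 0`. -/
theorem covariance_increment_negligible
    {Ω : Type*} [MeasurableSpace Ω] (P : Measure Ω) [IsProbabilityMeasure P]
    (η : ℝ → Ω → ℝ)
    (hmeas : ∀ t, Measurable (η t))
    (hGauss : ∀ (n : ℕ) (t : Fin n → ℝ) (a : Fin n → ℝ), (∀ j, t j ∈ Icc (0:ℝ) 1) →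
      ∃ v : ℝ≥0, Measure.map (fun ω => ∑ j, a j * η (t j) ω) P = gaussianReal 0 v)
    (hcont : ∀ ω, ContinuousOn (fun t => η t ω) (Icc (0:ℝ) 1))
    (U : ℝ → ℝ → ℝ) (hU : ∀ s t, U s t = ∫ ω, η s ω * η t ω ∂P)
    (hU0 : 0 < U 0 0)
    (δ : ℝ) (hδ : 0 < δ) (φ : ℝ → ℝ) (hφ : ∀ t ∈ Icc (0:ℝ) δ, 0 < φ t)
    (hlimsup : ∀ᵐ ω ∂P,
      Filter.limsup (fun t => (η t ω - η 0 ω) / φ t) (𝓝[>] (0:ℝ)) = 1) :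
    Filter.limsup (fun t => |U 0 0 - U 0 t| / (U 0 0 * φ t)) (𝓝[>] (0:ℝ)) = 0 :=
  covariance_increment_negligible_general P η hmeas hGauss U hU δ hδ φ hφ hlimsup
end
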